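/- Let {h'_n}_{n≥1} and {h''_n}_{n≥1} be non-random sequences with 0 < h'_n ≤ h''_n < 1 such that each of {h'_n} and {h''_n} satisfies (H.1), (H.2), (H.3). Then, for any fixed λ > 1, with probability one, lim_{n→∞} sup_{h∈[h'_n,h''_n]} (V_n(1 − λh) − (1 − h))/h = 1 − λ. -/

import Mathlib

open MeasureTheory Filter Set Asymptotics
open scoped Classical

noncomputable section

/-- Empirical distribution function of the first `n` observations. -/
def empDF {Ω : Type*} (X : ℕ → Ω → ℝ) (n : ℕ) (x : ℝ) (ω : Ω) : ℝ :=
  (((Finset.range n).filter (fun i => X i ω ≤ x)).card : ℝ) / (n : ℝ)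

/-- The Strassen set `S₀`: absolutely continuous functions `g` on `[-1,1]` with `g 0 = 0`
and Lebesgue derivative `d` satisfying `∫_{-1}^{1} d(s)² ds ≤ 1`. -/
def StrassenSet : Set (ℝ → ℝ) :=
  {g | g 0 = 0 ∧ ∃ d : ℝ → ℝ,
    IntervalIntegrable d volume (-1) 1 ∧
    IntervalIntegrable (fun u => d u ^ 2) volume (-1) 1 ∧
    (∀ s ∈ Icc (-1 : ℝ) 1, g s = ∫ u in (0 : ℝ)..s, d u) ∧
    (∫ u in (-1 : ℝ)..(1 : ℝ), d u ^ 2) ≤ 1}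

/-- Sup-norm over `[-1,1]`. -/
def supNorm (g : ℝ → ℝ) : ℝ := ⨆ s : Icc (-1 : ℝ) 1, |g s.1|

/-- Sup-norm over `[0,1]`. -/
def supNormP (g : ℝ → ℝ) : ℝ := ⨆ s : Icc (0 : ℝ) 1, |g s.1|

/-- (H.1): `h_n ↓ 0` and `n·h_n ↑ ∞`. -/
def H1 (h : ℕ → ℝ) : Prop :=
  Antitone h ∧ Tendsto h atTop (nhds 0) ∧
    Monotone (fun n : ℕ => (n : ℝ) * h n) ∧ Tendsto (fun n : ℕ => (n : ℝ) * h n) atTop atTop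

/-- (H.2): `log(1/h_n)/log log n → ∞`. -/
def H2 (h : ℕ → ℝ) : Prop :=
  Tendsto (fun n : ℕ => Real.log (1 / h n) / Real.log (Real.log n)) atTop atTop

/-- (H.3): `n·h_n/log n → ∞`. -/
def H3 (h : ℕ → ℝ) : Prop :=
  Tendsto (fun n : ℕ => (n : ℝ) * h n / Real.log n) atTop atTop

/-- (H.4)(i). -/
def H4i (h₁ : ℕ → ℝ) : Prop :=
  Tendsto (fun n : ℕ => Real.sqrt n * h₁ n * Real.log (1 / h₁ n) /
    (Real.log n * Real.sqrt (Real.log (Real.log n)))) atTop atTop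

/-- (H.4)(ii). -/
def H4ii (h₁ h₂ : ℕ → ℝ) : Prop :=
  (fun n : ℕ => Real.sqrt (h₂ n * Real.log (1 / h₂ n)) / (h₁ n * Real.log (1 / h₁ n)))
    =o[atTop] (fun n : ℕ => Real.sqrt n / Real.log n)

/-- (H.4): (i) or (ii). -/
def H4 (h₁ h₂ : ℕ → ℝ) : Prop := H4i h₁ ∨ H4ii h₁ h₂

/-- iid uniform (0,1) random variables. -/
def IsUniformSample {Ω : Type*} [MeasurableSpace Ω] (P : Measure Ω) (U : ℕ → Ω → ℝ) : Prop :=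
  (∀ i, Measurable (U i)) ∧
  ProbabilityTheory.iIndepFun U P ∧
  (∀ i, ∀ t ∈ Icc (0 : ℝ) 1, P {ω | U i ω ≤ t} = ENNReal.ofReal t)

/-- Uniform empirical quantile function `V_n`. -/
def empQV {Ω : Type*} (U : ℕ → Ω → ℝ) (n : ℕ) (t : ℝ) (ω : Ω) : ℝ :=
  sInf {u : ℝ | 0 ≤ u ∧ t ≤ empDF U n u ω}

/-- Uniform empirical process `α_n`. -/
def empProc {Ω : Type*} (U : ℕ → Ω → ℝ) (n : ℕ) (t : ℝ) (ω : Ω) : ℝ :=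
  Real.sqrt n * (empDF U n t ω - t)

/-- Uniform quantile process `β_n`. -/
def quantProc {Ω : Type*} (U : ℕ → Ω → ℝ) (n : ℕ) (t : ℝ) (ω : Ω) : ℝ :=
  Real.sqrt n * (empQV U n t ω - t)

/-- Increments `ξ_n(h,t;s)` of the uniform empirical process. -/
def xiInc {Ω : Type*} (U : ℕ → Ω → ℝ) (n : ℕ) (h t s : ℝ) (ω : Ω) : ℝ :=
  empProc U n (t + h * s) ω - empProc U n t ω

/-- Increments `ζ_n(h,t;s)` of the uniform quantile process. -/
def zetaInc {Ω : Type*} (U : ℕ → Ω → ℝ) (n : ℕ) (h t s : ℝ) (ω : Ω) : ℝ :=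
  quantProc U n (t + h * s) ω - quantProc U n t ω


/-!
Uniformly in `h ∈ [h'_n, h''_n]`, `V_n(1 - λh) = 1 - λh + o(h)` almost surely, which gives the
limit `1 - λ` at once. By monotonicity of `U_n` this reduces to the relative law of large numbers
`U_n(s) - s = o(1 - s)` uniformly in `1 - s ∈ [(λ - ε) h'_n, (λ + ε) h''_n]`, and by monotonicity
again to the same statement on a grid of mesh `≍ h'_n`, hence of `O(n)` points. The number of
`U_i > s` is binomial with mean `n(1 - s) ≥ n h'_n ≫ log n` (H.3), so a Chernoff bound whose
exponent is proportional to this mean makes each grid point fail with probability `≤ n⁻⁴`;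
Borel–Cantelli concludes.
-/

open Real ProbabilityTheory Topology

lemma H3.const_mul {h : ℕ → ℝ} (hh : H3 h) {c : ℝ} (hc : 0 < c) : H3 (fun n => c * h n) := by
  unfold H3 at *
  simpa only [mul_left_comm _ c, mul_div_assoc] using hh.const_mul_atTop hc

lemma H3.summable_mul_exp {ℓ : ℕ → ℝ} (hℓ : H3 ℓ) {c : ℝ} (hc : 0 < c) :
    Summable fun n : ℕ => (1 / ℓ n + 1) * exp (-(c * (n * ℓ n))) := by
  refine Summable.of_norm_bounded_eventually_nat
    ((summable_one_div_nat_pow.2 (by norm_num : 1 < 3)).mul_left 2) ?_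
  filter_upwards [hℓ.eventually_ge_atTop (max (4 / c) 1), eventually_ge_atTop 3] with n hM hn
  have hn3 : (3 : ℝ) ≤ n := by exact_mod_cast hn
  have hlog : 1 ≤ log n := by
    rw [le_log_iff_exp_le (by linarith)]
    linarith [exp_one_lt_d9]
  rw [le_div_iff₀ (by linarith)] at hM
  have hnℓ : log n ≤ n * ℓ n := by nlinarith [le_max_right (4 / c) 1]
  have hcnℓ : 4 * log n ≤ c * (n * ℓ n) := by
    have := mul_le_mul_of_nonneg_right (le_max_left (4 / c) 1) (by linarith : 0 ≤ log n)
    rw [div_mul_eq_mul_div, div_le_iff₀ hc] at this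
    nlinarith [mul_le_mul_of_nonneg_left hM hc.le]
  have hℓ0 : 0 < ℓ n := by
    by_contra! h
    nlinarith [(by positivity : (0 : ℝ) ≤ n)]
  have hinv : 1 / ℓ n + 1 ≤ 2 * n := by
    rw [div_add_one hℓ0.ne', div_le_iff₀ hℓ0]
    nlinarith
  have hexp : exp (-(c * (n * ℓ n))) ≤ 1 / (n : ℝ) ^ 4 := by
    calc exp (-(c * (n * ℓ n))) ≤ exp (-(4 * log n)) := exp_le_exp.2 (by linarith)
      _ = 1 / (n : ℝ) ^ 4 := by
        rw [exp_neg, show 4 * log n = log ((n : ℝ) ^ 4) by simp [log_pow], exp_log (by positivity),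
          one_div]
  rw [Real.norm_of_nonneg (by positivity)]
  calc (1 / ℓ n + 1) * exp (-(c * (n * ℓ n))) ≤ (2 * n) * (1 / (n : ℝ) ^ 4) := by
        gcongr
    _ = 2 * (1 / (n : ℝ) ^ 3) := by field_simp

lemma ae_eventually_notMem_of_measureReal_le {Ω : Type*} [MeasurableSpace Ω] {μ : Measure Ω}
    [IsFiniteMeasure μ] {s : ℕ → Set Ω} {f : ℕ → ℝ} (hf : Summable f)
    (hs : ∀ᶠ n in atTop, μ.real (s n) ≤ f n) : ∀ᵐ ω ∂μ, ∀ᶠ n in atTop, ω ∉ s n := by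
  have hsum : Summable fun n => μ.real (s n) :=
    hf.of_norm_bounded_eventually_nat (by simpa only [Real.norm_of_nonneg measureReal_nonneg])
  apply ae_eventually_notMem
  simp_rw [← ofReal_measureReal (measure_ne_top μ _)]
  rw [← ENNReal.ofReal_tsum_of_nonneg (fun _ => measureReal_nonneg) hsum]
  exact ENNReal.ofReal_ne_top

lemma sum_indicator_one_mem_Icc {Ω : Type*} (A : ℕ → Set Ω) (ω : Ω) (n : ℕ) :
    ∑ i ∈ Finset.range n, (A i).indicator (1 : Ω → ℝ) ω ∈ Icc (0 : ℝ) n := by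
  refine ⟨Finset.sum_nonneg fun i _ => Set.indicator_nonneg (fun _ _ => zero_le_one) _, ?_⟩
  calc ∑ i ∈ Finset.range n, (A i).indicator 1 ω ≤ ∑ _i ∈ Finset.range n, (1 : ℝ) :=
        Finset.sum_le_sum fun i _ => Set.indicator_le_self' (fun _ _ => zero_le_one) _
    _ = n := by simp

section Chernoff

open Finset

variable {Ω : Type*} [MeasurableSpace Ω] {P : Measure Ω} [IsProbabilityMeasure P]

lemma mgf_indicator_one {A : Set Ω} (hA : MeasurableSet A) (t : ℝ) :
    mgf (A.indicator 1) P t = 1 + P.real A * (exp t - 1) := by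
  have : (fun ω => exp (t * A.indicator 1 ω))
      = fun ω => A.indicator (fun _ => exp t - 1) ω + 1 := by
    ext ω
    by_cases h : ω ∈ A <;> simp [h]
  rw [mgf, this, integral_add ((integrable_const _).indicator hA) (integrable_const 1),
    integral_indicator_const _ hA]
  simp only [smul_eq_mul, integral_const, probReal_univ]
  ring

variable {A : ℕ → Set Ω} {q : ℝ}

lemma mgf_sum_indicator_le (hA : ∀ i, MeasurableSet (A i))
    (hind : iIndepFun (fun i => (A i).indicator (1 : Ω → ℝ)) P) (hq : ∀ i, P.real (A i) = q)
    (n : ℕ) {u : ℝ} (hu : |u| ≤ 1) :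
    mgf (∑ i ∈ range n, (A i).indicator 1) P u ≤ exp (n * q * (u + u ^ 2)) := by
  have hq0 : 0 ≤ q := hq 0 ▸ measureReal_nonneg
  have hq1 : q ≤ 1 := hq 0 ▸ measureReal_le_one
  have hexp : exp u - 1 ≤ u + u ^ 2 := by linarith [(abs_le.1 (abs_exp_sub_one_sub_id_le hu)).2]
  rw [hind.mgf_sum (fun i => measurable_const.indicator (hA i)), prod_congr rfl
    fun i _ => by rw [mgf_indicator_one (hA i), hq i], prod_const, card_range,
    mul_assoc, exp_nat_mul]
  refine pow_le_pow_left₀ (by nlinarith [exp_pos u]) ?_ n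
  calc 1 + q * (exp u - 1) ≤ exp (q * (exp u - 1)) := by linarith [add_one_le_exp (q * (exp u - 1))]
    _ ≤ exp (q * (u + u ^ 2)) := by gcongr

lemma measureReal_abs_sum_indicator_sub_ge_le (hA : ∀ i, MeasurableSet (A i))
    (hind : iIndepFun (fun i => (A i).indicator (1 : Ω → ℝ)) P) (hq : ∀ i, P.real (A i) = q)
    (n : ℕ) (x : ℝ) {t : ℝ} (ht0 : 0 ≤ t) (ht1 : t ≤ 1) :
    P.real {ω | x ≤ |∑ i ∈ range n, (A i).indicator 1 ω - n * q|}
      ≤ 2 * exp (n * q * t ^ 2 - t * x) := by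
  set S : Ω → ℝ := ∑ i ∈ range n, (A i).indicator 1 with hS
  have hSapply : ∀ ω, S ω = ∑ i ∈ range n, (A i).indicator 1 ω := fun ω => by
    simp [hS, Finset.sum_apply]
  have hSmeas : Measurable S := by
    rw [funext hSapply]
    exact Finset.measurable_sum _ fun i _ => measurable_const.indicator (hA i)
  have hSIcc : ∀ ω, S ω ∈ Icc (0 : ℝ) n := fun ω => hSapply ω ▸ sum_indicator_one_mem_Icc A ω n
  have hint : ∀ u : ℝ, Integrable (fun ω => exp (u * S ω)) P := fun u =>
    integrable_exp_mul_of_mem_Icc hSmeas.aemeasurable (ae_of_all _ hSIcc)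
  have hmgf := fun u (hu : |u| ≤ 1) => mgf_sum_indicator_le hA hind hq n hu
  have hupper : P.real {ω | n * q + x ≤ S ω} ≤ exp (n * q * t ^ 2 - t * x) := by
    refine (measure_ge_le_exp_mul_mgf _ ht0 (hint t)).trans ?_
    calc exp (-t * (n * q + x)) * mgf S P t
        ≤ exp (-t * (n * q + x)) * exp (n * q * (t + t ^ 2)) := by
          gcongr; exact hmgf t (abs_le.2 ⟨by linarith, ht1⟩)
      _ = exp (n * q * t ^ 2 - t * x) := by rw [← exp_add]; ring_nf
  have hlower : P.real {ω | S ω ≤ n * q - x} ≤ exp (n * q * t ^ 2 - t * x) := by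
    refine (measure_le_le_exp_mul_mgf _ (neg_nonpos.2 ht0) (hint (-t))).trans ?_
    calc exp (-(-t) * (n * q - x)) * mgf S P (-t)
        ≤ exp (-(-t) * (n * q - x)) * exp (n * q * (-t + (-t) ^ 2)) := by
          gcongr; exact hmgf (-t) (by rw [abs_neg, abs_of_nonneg ht0]; exact ht1)
      _ = exp (n * q * t ^ 2 - t * x) := by rw [← exp_add]; ring_nf
  have hsub : {ω | x ≤ |∑ i ∈ range n, (A i).indicator 1 ω - n * q|}
      ⊆ {ω | n * q + x ≤ S ω} ∪ {ω | S ω ≤ n * q - x} := fun ω hω => by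
    rw [mem_ofPred, ← hSapply] at hω
    rcases le_abs'.1 hω with h | h
    · exact Or.inr (show S ω ≤ n * q - x by linarith)
    · exact Or.inl (show n * q + x ≤ S ω by linarith)
  calc _ ≤ P.real ({ω | n * q + x ≤ S ω} ∪ {ω | S ω ≤ n * q - x}) := measureReal_mono hsub
    _ ≤ P.real {ω | n * q + x ≤ S ω} + P.real {ω | S ω ≤ n * q - x} := measureReal_union_le _ _
    _ ≤ 2 * exp (n * q * t ^ 2 - t * x) := by linarith

end Chernoff

section Empirical

open Finset

variable {Ω : Type*}

lemma monotone_empDF (U : ℕ → Ω → ℝ) (n : ℕ) (ω : Ω) : Monotone fun x => empDF U n x ω := by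
  intro x y hxy
  simp only [empDF]
  gcongr ?_ / _
  exact_mod_cast Finset.card_le_card
    (monotone_filter_right _ fun i _ (hi : U i ω ≤ x) => hi.trans hxy)

lemma empDF_sub_eq (U : ℕ → Ω → ℝ) {n : ℕ} (hn : n ≠ 0) (s : ℝ) (ω : Ω) :
    empDF U n s ω - s
      = -(∑ i ∈ range n, {ω | s < U i ω}.indicator 1 ω - n * (1 - s)) / n := by
  have hsum : ∑ i ∈ range n, {ω | s < U i ω}.indicator (1 : Ω → ℝ) ω
      = n - ((range n).filter fun i => U i ω ≤ s).card := by
    simp only [Set.indicator_apply, mem_ofPred, Pi.one_apply, sum_boole]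
    have := card_filter_add_card_filter_not (s := range n) (fun i => U i ω ≤ s)
    simp only [not_le, card_range] at this
    rw [eq_sub_iff_add_eq']
    exact_mod_cast this
  rw [hsum, empDF]
  field_simp
  ring

lemma abs_empQV_sub_le (U : ℕ → Ω → ℝ) {n : ℕ} {t δ : ℝ} {ω : Ω} (h0 : 0 ≤ t + δ)
    (hup : t ≤ empDF U n (t + δ) ω) (hlo : empDF U n (t - δ) ω < t) :
    |empQV U n t ω - t| ≤ δ := by
  rw [abs_sub_le_iff]
  constructor
  · exact sub_le_iff_le_add'.2 (csInf_le ⟨0, fun _ hu => hu.1⟩ ⟨h0, hup⟩)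
  · refine sub_le_comm.1 (le_csInf ⟨t + δ, h0, hup⟩ ?_)
    rintro u ⟨-, hu⟩
    by_contra! hc
    exact (hu.trans (monotone_empDF U n ω hc.le)).not_gt hlo

variable [MeasurableSpace Ω] {P : Measure Ω} [IsProbabilityMeasure P] {U : ℕ → Ω → ℝ}

lemma measureReal_abs_empDF_sub_ge_le (hU : IsUniformSample P U) {n : ℕ} (hn : n ≠ 0) {s : ℝ}
    (hs0 : 0 ≤ s) (hs1 : s ≤ 1) (x : ℝ) {t : ℝ} (ht0 : 0 ≤ t) (ht1 : t ≤ 1) :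
    P.real {ω | x ≤ |empDF U n s ω - s|} ≤ 2 * exp (n * (1 - s) * t ^ 2 - t * (n * x)) := by
  have hA : ∀ i, MeasurableSet {ω | s < U i ω} := fun i =>
    measurableSet_lt measurable_const (hU.1 i)
  have hind : iIndepFun (fun i => {ω | s < U i ω}.indicator (1 : Ω → ℝ)) P := by
    convert hU.2.1.comp (fun _ => (Ioi s).indicator (1 : ℝ → ℝ))
      (fun _ => measurable_const.indicator measurableSet_Ioi) using 1
    ext i ω
    simp [Set.indicator_apply]
  have hq : ∀ i, P.real {ω | s < U i ω} = 1 - s := fun i => by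
    rw [show {ω | s < U i ω} = {ω | U i ω ≤ s}ᶜ by ext; simp,
      probReal_compl_eq_one_sub (measurableSet_le (hU.1 i) measurable_const), measureReal_def,
      hU.2.2 i s ⟨hs0, hs1⟩, ENNReal.toReal_ofReal hs0]
  have hn0 : (0 : ℝ) < n := by positivity
  have hset : {ω | x ≤ |empDF U n s ω - s|}
      = {ω | n * x ≤ |∑ i ∈ range n, {ω | s < U i ω}.indicator 1 ω - n * (1 - s)|} := by
    ext ω
    rw [mem_ofPred, mem_ofPred, empDF_sub_eq U hn, abs_div, abs_neg, abs_of_pos hn0,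
      le_div_iff₀ hn0, mul_comm]
  rw [hset]
  exact measureReal_abs_sum_indicator_sub_ge_le hA hind hq n (n * x) ht0 ht1

end Empirical

lemma Monotone.abs_sub_le_of_mem_Icc {F : ℝ → ℝ} (hF : Monotone F) {a b x e : ℝ}
    (hx : x ∈ Icc a b) (ha : |F a - a| ≤ e) (hb : |F b - b| ≤ e) : |F x - x| ≤ e + (b - a) := by
  rw [abs_le] at *
  constructor <;> linarith [hF hx.1, hF hx.2, hx.1, hx.2]

lemma Monotone.abs_one_sub_le_of_grid {F : ℝ → ℝ} (hF : Monotone F) {ℓ η δ : ℝ} {K : ℕ}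
    (hη : 0 < η) (hηℓ : η ≤ δ * ℓ / 4) (hδ : 0 ≤ δ) (hδ1 : δ ≤ 1)
    (hgrid : ∀ k ≤ K, |F (1 - (ℓ + k * η)) - (1 - (ℓ + k * η))| ≤ δ / 4 * (ℓ + k * η))
    {u : ℝ} (hℓu : ℓ ≤ u) (huK : u < ℓ + K * η) : |F (1 - u) - (1 - u)| ≤ δ * u := by
  set k := ⌊(u - ℓ) / η⌋₊
  have hk : k * η ≤ u - ℓ := (le_div_iff₀ hη).1 (Nat.floor_le (div_nonneg (by linarith) hη.le))
  have hk1 : u - ℓ < (k + 1) * η := (div_lt_iff₀ hη).1 (Nat.lt_floor_add_one _)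
  have hkK : k + 1 ≤ K := by
    have : (k : ℝ) < K := lt_of_mul_lt_mul_right (hk.trans_lt (by linarith)) hη.le
    exact_mod_cast this
  have hu0 : 0 ≤ u := by nlinarith
  have hstep := hF.abs_sub_le_of_mem_Icc (x := 1 - u) ⟨by push_cast; linarith, by linarith⟩
    (hgrid (k + 1) hkK) ((hgrid k (by omega)).trans (by gcongr; linarith))
  calc |F (1 - u) - (1 - u)|
      ≤ δ / 4 * (ℓ + (k + 1 : ℕ) * η) + (1 - (ℓ + k * η) - (1 - (ℓ + (k + 1 : ℕ) * η))) := hstep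
    _ ≤ δ * u := by push_cast; nlinarith

section Ratio

open Finset

lemma natCeil_div_mesh_add_one_le {r ℓ δ : ℝ} (hr0 : 0 ≤ r) (hr1 : r ≤ 1) (hℓ : 0 < ℓ)
    (hδ : 0 < δ) (hδ2 : δ ≤ 2) : (⌈r / (δ * ℓ / 4)⌉₊ : ℝ) + 1 ≤ 4 / δ * (1 / ℓ + 1) := by
  have hceil := Nat.ceil_lt_add_one (div_nonneg hr0 (by positivity : 0 ≤ δ * ℓ / 4))
  have hdiv : r / (δ * ℓ / 4) ≤ 4 / δ * (1 / ℓ) := by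
    rw [div_le_iff₀ (by positivity)]
    calc r ≤ 1 := hr1
      _ = 4 / δ * (1 / ℓ) * (δ * ℓ / 4) := by field_simp
  have : 2 ≤ 4 / δ := by rw [le_div_iff₀ hδ]; linarith
  linarith

variable {Ω : Type*} [MeasurableSpace Ω] {P : Measure Ω} [IsProbabilityMeasure P]
  {U : ℕ → Ω → ℝ}

def gridDeviation (U : ℕ → Ω → ℝ) (n : ℕ) (ℓ η δ : ℝ) (K : ℕ) : Set Ω :=
  ⋃ k ∈ range (K + 1),
    {ω | δ / 4 * (ℓ + k * η) ≤ |empDF U n (1 - (ℓ + k * η)) ω - (1 - (ℓ + k * η))|}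

lemma measureReal_gridDeviation_le (hU : IsUniformSample P U) {n : ℕ} (hn : n ≠ 0)
    {ℓ η δ : ℝ} {K : ℕ} (hℓ : 0 ≤ ℓ) (hη : 0 ≤ η) (hK : ℓ + K * η ≤ 1) (hδ : 0 ≤ δ)
    (hδ1 : δ ≤ 1) :
    P.real (gridDeviation U n ℓ η δ K) ≤ (K + 1) * (2 * exp (-(δ ^ 2 / 64 * (n * ℓ)))) := by
  refine (measureReal_biUnion_finset_le _ _).trans ?_
  calc _ ≤ ∑ _k ∈ range (K + 1), 2 * exp (-(δ ^ 2 / 64 * (n * ℓ))) := sum_le_sum fun k hk => ?_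
    _ = _ := by simp
  have hkK : (k : ℝ) ≤ K := by exact_mod_cast Nat.lt_succ_iff.1 (mem_range.1 hk)
  have hkη : 0 ≤ k * η := by positivity
  have hu1 : ℓ + k * η ≤ 1 := by nlinarith
  refine (measureReal_abs_empDF_sub_ge_le hU hn (by linarith) (by linarith) _ (t := δ / 8)
    (by positivity) (by linarith)).trans ?_
  gcongr
  calc n * (1 - (1 - (ℓ + k * η))) * (δ / 8) ^ 2 - δ / 8 * (n * (δ / 4 * (ℓ + k * η)))
      = -(δ ^ 2 / 64 * (n * (ℓ + k * η))) := by ring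
    _ ≤ -(δ ^ 2 / 64 * (n * ℓ)) := by gcongr; linarith

theorem ae_eventually_abs_empDF_sub_le_mul (hU : IsUniformSample P U) {ℓ r : ℕ → ℝ}
    (hℓ : ∀ n, 0 < ℓ n) (hℓr : ∀ n, ℓ n ≤ r n) (hr : Tendsto r atTop (𝓝 0)) (hH3 : H3 ℓ)
    {δ : ℝ} (hδ : 0 < δ) (hδ1 : δ ≤ 1) :
    ∀ᵐ ω ∂P, ∀ᶠ n in atTop, ∀ s, ℓ n ≤ 1 - s → 1 - s ≤ r n →
      |empDF U n s ω - s| ≤ δ * (1 - s) := by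
  -- Mesh `≍ ℓ n`: the `O(1 / ℓ n) = O(n)` grid points each fail with probability `≤ n⁻⁴`.
  set η : ℕ → ℝ := fun n => δ * ℓ n / 4
  set K : ℕ → ℕ := fun n => ⌈r n / η n⌉₊
  have hη : ∀ n, 0 < η n := fun n => by have := hℓ n; positivity
  have hrK : ∀ n, r n ≤ K n * η n := fun n => (div_le_iff₀ (hη n)).1 (Nat.le_ceil _)
  have hsmall : ∀ᶠ n in atTop, 3 * r n ≤ 1 ∧ n ≠ 0 :=
    (hr.eventually (ge_mem_nhds (by norm_num : (0 : ℝ) < 1 / 3))).mono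
      (fun n hn => by linarith) |>.and (eventually_ne_atTop 0)
  have hB : ∀ᶠ n in atTop, P.real (gridDeviation U n (ℓ n) (η n) δ (K n))
      ≤ 8 / δ * ((1 / ℓ n + 1) * exp (-(δ ^ 2 / 64 * (n * ℓ n)))) := by
    filter_upwards [hsmall] with n ⟨hr1, hn⟩
    have hK := natCeil_div_mesh_add_one_le ((hℓ n).le.trans (hℓr n)) (by linarith [hℓ n, hℓr n])
      (hℓ n) hδ (by linarith)
    have hKη : K n * η n < r n + η n := by
      have := mul_lt_mul_of_pos_right
        (Nat.ceil_lt_add_one (div_nonneg ((hℓ n).le.trans (hℓr n)) (hη n).le)) (hη n)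
      rwa [add_mul, one_mul, div_mul_cancel₀ _ (hη n).ne'] at this
    have hηℓ : η n ≤ ℓ n := by
      show δ * ℓ n / 4 ≤ ℓ n
      nlinarith [hℓ n]
    refine (measureReal_gridDeviation_le hU hn (hℓ n).le (hη n).le
      (by linarith [hℓr n]) hδ.le hδ1).trans ?_
    calc ((K n : ℝ) + 1) * (2 * exp (-(δ ^ 2 / 64 * (n * ℓ n))))
        ≤ 4 / δ * (1 / ℓ n + 1) * (2 * exp (-(δ ^ 2 / 64 * (n * ℓ n)))) := by gcongr
      _ = _ := by ring
  filter_upwards [ae_eventually_notMem_of_measureReal_le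
    ((hH3.summable_mul_exp (by positivity)).mul_left (8 / δ)) hB] with ω hω
  filter_upwards [hω, hsmall] with n hωn _ s hs1 hs2
  have hgrid : ∀ k ≤ K n, |empDF U n (1 - (ℓ n + k * η n)) ω - (1 - (ℓ n + k * η n))|
      ≤ δ / 4 * (ℓ n + k * η n) := fun k hk => by
    by_contra! h
    exact hωn (mem_biUnion (mem_range.2 (Nat.lt_succ_of_le hk)) h.le)
  simpa only [sub_sub_cancel] using (monotone_empDF U n ω).abs_one_sub_le_of_grid (hη n) le_rfl
    hδ.le hδ1 hgrid hs1 (by linarith [hrK n, hℓ n])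

theorem ae_eventually_abs_empQV_sub_le (hU : IsUniformSample P U) {h₁ h₂ : ℕ → ℝ}
    (hpos : ∀ n, 0 < h₁ n) (hle : ∀ n, h₁ n ≤ h₂ n) (h₂₀ : Tendsto h₂ atTop (𝓝 0))
    (hH3 : H3 h₁) {lam ε : ℝ} (hε : 0 < ε) (hεlam : ε < lam) :
    ∀ᵐ ω ∂P, ∀ᶠ n in atTop, ∀ h ∈ Icc (h₁ n) (h₂ n),
      |empQV U n (1 - lam * h) ω - (1 - lam * h)| ≤ ε * h := by
  have hlam : 0 < lam := hε.trans hεlam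
  have hr : Tendsto (fun n => (lam + ε) * h₂ n) atTop (𝓝 0) := by
    simpa using h₂₀.const_mul (lam + ε)
  filter_upwards [ae_eventually_abs_empDF_sub_le_mul hU (ℓ := fun n => (lam - ε) * h₁ n)
    (fun n => mul_pos (by linarith) (hpos n)) (fun n => by nlinarith [hpos n, hle n]) hr
    (hH3.const_mul (by linarith)) (δ := ε / (2 * lam)) (by positivity)
    (by rw [div_le_one (by positivity)]; linarith)] with ω hω
  filter_upwards [hω, hr.eventually (ge_mem_nhds zero_lt_one)] with n hn hr1 h ⟨hh₁, hh₂⟩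
  have hh : 0 < h := (hpos n).trans_le hh₁
  have hdev : ∀ c, lam - ε ≤ c → c ≤ lam + ε →
      |empDF U n (1 - c * h) ω - (1 - c * h)| ≤ ε / (2 * lam) * (c * h) := fun c hc₁ hc₂ => by
    simpa only [sub_sub_cancel] using hn (1 - c * h)
      (by rw [sub_sub_cancel]; exact mul_le_mul hc₁ hh₁ (hpos n).le (by linarith))
      (by rw [sub_sub_cancel]; exact mul_le_mul hc₂ hh₂ hh.le (by linarith))
  have hplus := abs_le.1 (hdev (lam - ε) le_rfl (by linarith))
  have hminus := abs_le.1 (hdev (lam + ε) (by linarith) le_rfl)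
  have hplus_le : ε / (2 * lam) * ((lam - ε) * h) ≤ ε * h := by
    rw [div_mul_eq_mul_div, div_le_iff₀ (by positivity)]
    nlinarith [mul_pos hε hh]
  have hminus_lt : ε / (2 * lam) * ((lam + ε) * h) < ε * h := by
    rw [div_mul_eq_mul_div, div_lt_iff₀ (by positivity)]
    nlinarith [mul_pos hε hh]
  apply abs_empQV_sub_le U
  · nlinarith [mul_le_mul_of_nonneg_left hh₂ (by linarith : 0 ≤ lam + ε)]
  · rw [show 1 - lam * h + ε * h = 1 - (lam - ε) * h by ring]
    linarith
  · rw [show 1 - lam * h - ε * h = 1 - (lam + ε) * h by ring]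
    linarith

end Ratio

lemma abs_ciSup_sub_le {ι : Type*} [Nonempty ι] {f : ι → ℝ} {c ε : ℝ}
    (h : ∀ i, |f i - c| ≤ ε) : |(⨆ i, f i) - c| ≤ ε := by
  have hbdd : BddAbove (range f) :=
    ⟨c + ε, forall_mem_range.2 fun i => by linarith [(abs_le.1 (h i)).2]⟩
  obtain ⟨i⟩ := ‹Nonempty ι›
  rw [abs_le]
  constructor
  · linarith [le_ciSup hbdd i, (abs_le.1 (h i)).1]
  · linarith [ciSup_le fun i => (by linarith [(abs_le.1 (h i)).2] : f i ≤ c + ε)]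

lemma tendsto_iSup_of_forall_eventually {α : Type*} {S : ℕ → Set α} (hS : ∀ n, (S n).Nonempty)
    {g : ℕ → α → ℝ} {c : ℝ} (h : ∀ ε > 0, ∀ᶠ n in atTop, ∀ x ∈ S n, |g n x - c| ≤ ε) :
    Tendsto (fun n => ⨆ x : S n, g n x) atTop (𝓝 c) := by
  refine Metric.tendsto_nhds.2 fun ε hε => (h (ε / 2) (half_pos hε)).mono fun n hn => ?_
  have := (hS n).to_subtype
  exact (abs_ciSup_sub_le fun x : S n => hn x x.2).trans_lt (half_lt_self hε)

theorem stmt_15_general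
    {Ω : Type*} [MeasurableSpace Ω] (P : Measure Ω) [IsProbabilityMeasure P]
    (U : ℕ → Ω → ℝ) (hU : IsUniformSample P U)
    (h₁ h₂ : ℕ → ℝ) (hpos : ∀ n, 0 < h₁ n) (hle : ∀ n, h₁ n ≤ h₂ n)
    (hH12 : H1 h₂)
    (hH31 : H3 h₁)
    (lam : ℝ) (hlam : 1 < lam) :
    ∀ᵐ ω ∂P, Tendsto (fun n =>
      ⨆ h : Icc (h₁ n) (h₂ n), (empQV U n (1 - lam * h.1) ω - (1 - h.1)) / h.1)
      atTop (nhds (1 - lam)) := by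
  have hε : ∀ m : ℕ, ∀ᵐ ω ∂P, ∀ᶠ n in atTop, ∀ h ∈ Icc (h₁ n) (h₂ n),
      |empQV U n (1 - lam * h) ω - (1 - lam * h)| ≤ 1 / (m + 1) * h := fun m =>
    ae_eventually_abs_empQV_sub_le hU hpos hle hH12.2.1 hH31 (by positivity)
      (((div_le_one (by positivity)).2 (by simp)).trans_lt hlam)
  filter_upwards [ae_all_iff.2 hε] with ω hω
  refine tendsto_iSup_of_forall_eventually (fun n => Set.nonempty_Icc.2 (hle n))
    (g := fun n h => (empQV U n (1 - lam * h) ω - (1 - h)) / h) fun ε hε => ?_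
  obtain ⟨m, hm⟩ := exists_nat_one_div_lt hε
  filter_upwards [hω m] with n hn h hh
  have h0 : 0 < h := (hpos n).trans_le hh.1
  rw [show (empQV U n (1 - lam * h) ω - (1 - h)) / h - (1 - lam)
      = (empQV U n (1 - lam * h) ω - (1 - lam * h)) / h by field_simp; ring,
    abs_div, abs_of_pos h0, div_le_iff₀ h0]
  exact (hn h hh).trans (by gcongr)

theorem stmt_15
    {Ω : Type*} [MeasurableSpace Ω] (P : Measure Ω) [IsProbabilityMeasure P]
    (U : ℕ → Ω → ℝ) (hU : IsUniformSample P U)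
    (h₁ h₂ : ℕ → ℝ) (hpos : ∀ n, 0 < h₁ n) (hle : ∀ n, h₁ n ≤ h₂ n) (hlt : ∀ n, h₂ n < 1)
    (hH11 : H1 h₁) (hH12 : H1 h₂) (hH21 : H2 h₁) (hH22 : H2 h₂)
    (hH31 : H3 h₁) (hH32 : H3 h₂)
    (lam : ℝ) (hlam : 1 < lam) :
    ∀ᵐ ω ∂P, Tendsto (fun n =>
      ⨆ h : Icc (h₁ n) (h₂ n), (empQV U n (1 - lam * h.1) ω - (1 - h.1)) / h.1)
      atTop (nhds (1 - lam)) :=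
  stmt_15_general P U hU h₁ h₂ hpos hle hH12 hH31 lam hlam
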